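/- Suppose in the follower's maximum 3-cycle packing all variable gadgets are consistent and every clause node δ_c is covered by a 2-cycle with some β-node. Then the truth assignment defined by 'variable is TRUE iff its gadget is consistent-with-TRUE' satisfies every clause of E. -/

import Mathlib

variable {V : Type*} [DecidableEq V]

/-- A directed (simple) cycle given as a list of distinct vertices. -/
def IsDicycle (A : V → V → Prop) (c : List V) : Prop :=
  2 ≤ c.length ∧ c.Nodup ∧ c.Chain' A ∧
    ∀ h : c ≠ [], A (c.getLast h) (c.head h)

def cycVerts (c : List V) : Set V := {v | v ∈ c}

/-- A `K`-cycle packing inside the vertex set `W`. -/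
def IsCyclePackingOn (A : V → V → Prop) (K : ℕ) (W : Set V) (P : Finset (List V)) : Prop :=
  (∀ c ∈ P, IsDicycle A c ∧ c.length ≤ K ∧ ∀ v ∈ c, v ∈ W) ∧
  (P : Set (List V)).Pairwise fun c d => ∀ v, v ∈ c → v ∉ d

def packSize (P : Finset (List V)) : ℕ := ∑ c ∈ P, c.length

def pcovered (P : Finset (List V)) : Set V := {v | ∃ c ∈ P, v ∈ c}

/-- Maximum size of a `K`-cycle packing on `G[W]`. -/
noncomputable def wDir (A : V → V → Prop) (K : ℕ) (W : Set V) : ℕ :=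
  sSup {n | ∃ P, IsCyclePackingOn A K W P ∧ packSize P = n}

/-- Minimum number of `L`-nodes covered over all maximum `K`-cycle packings on `G[W]`. -/
noncomputable def wLDir (A : V → V → Prop) (K : ℕ) (L W : Set V) : ℕ :=
  sInf {k | ∃ P, IsCyclePackingOn A K W P ∧ packSize P = wDir A K W ∧
    (pcovered P ∩ L).ncard = k}

/-- The nodes of a variable gadget: `α_i`, `β_{pol,i}` and the leaf nodes
(`t/τ` for `pol = true`, `f/φ` for `pol = false`). -/
inductive GNode : Type
  | alpha (i : Fin 2)
  | beta (pol : Bool) (i : Fin 2)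
  | leaf (pol : Bool) (i : Fin 2)
deriving DecidableEq

/-- The internal arcs of a variable gadget. -/
def gadgetArc : GNode → GNode → Prop
  | .alpha i, .beta _ j => i = j
  | .beta pol i, .leaf pol' j => pol = pol' ∧ i = j
  | .leaf _ i, .alpha j => i = j
  | .leaf pol i, .leaf pol' j => pol = pol' ∧ i ≠ j
  | _, _ => False

/-- Vertices of the KEP construction: gadget nodes (one gadget per variable in `ι`),
clause nodes (`Fin m`), and the special node `d` (`Unit`). -/
abbrev KVert (ι : Type*) (m : ℕ) := (ι × GNode) ⊕ (Fin m) ⊕ Unit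

/-- The arcs of the KEP construction: gadget-internal arcs, 2-cycles between each clause
node `δ_c` and `d`, and 2-cycles between `δ_c` and `β_{v,pol,i}` exactly when `c` is the
`i`-th clause containing the literal `(v, pol)` (recorded by `occ`). -/
def kepArc {ι : Type*} {m : ℕ} (occ : ι → Bool → Fin 2 → Fin m) :
    KVert ι m → KVert ι m → Prop := fun a b =>
  match a, b with
  | .inl (v, x), .inl (w, y) => v = w ∧ gadgetArc x y
  | .inl (v, .beta pol i), .inr (.inl c) => occ v pol i = c
  | .inr (.inl c), .inl (v, .beta pol i) => occ v pol i = c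
  | .inr (.inl _), .inr (.inr _) => True
  | .inr (.inr _), .inr (.inl _) => True
  | _, _ => False

/-! A clause node `δ_cl` paired with `β_{v,pol,i}` forces `occ v pol i = cl`, so the literal
`(v, pol)` occurs in clause `cl`. The gadget of `v` already spends `β_{v,¬A v,i}` on one of
its triangles, and packed cycles are disjoint, so `pol = A v`: the literal is true under `A`. -/

section

variable {V : Type*}

theorem IsDicycle.rel_of_cycVerts_eq_pair {R : V → V → Prop} {c : List V} {x y : V}
    (hc : IsDicycle R c) (hxy : cycVerts c = {x, y}) : R x y := by
  obtain ⟨hlen, hnd, hch, hlast⟩ := hc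
  have hmem : ∀ z, z ∈ c ↔ z = x ∨ z = y := fun z => by
    simpa [cycVerts] using Set.ext_iff.mp hxy z
  match c, hlen, hnd, hch, hlast, hmem with
  | [a, b], _, hnd, hch, hlast, hmem =>
    have hab : R a b := List.isChain_pair.mp hch
    have hba : R b a := by simpa using hlast
    have hne : a ≠ b := by simpa using hnd
    have ha := (hmem a).mp (by simp)
    have hb := (hmem b).mp (by simp)
    have hx := (hmem x).mpr (Or.inl rfl)
    have hy := (hmem y).mpr (Or.inr rfl)
    simp only [List.mem_cons, List.not_mem_nil, or_false] at hx hy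
    rcases hx with rfl | rfl <;> rcases hy with rfl | rfl <;> simp_all
  | a :: b :: d :: _, _, hnd, _, _, hmem =>
    have ha := (hmem a).mp (by simp)
    have hb := (hmem b).mp (by simp)
    have hd := (hmem d).mp (by simp)
    simp only [List.nodup_cons, List.mem_cons, not_or] at hnd
    grind

theorem IsCyclePackingOn.eq_of_mem_of_mem {R : V → V → Prop} {K : ℕ} {W : Set V}
    {P : Finset (List V)} (hP : IsCyclePackingOn R K W P) {c d : List V} (hc : c ∈ P)
    (hd : d ∈ P) {v : V} (hvc : v ∈ c) (hvd : v ∈ d) : c = d := by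
  by_contra hcd
  exact hP.2 hc hd hcd v hvc hvd

end

theorem stmt15_general {ι : Type*} {m : ℕ}
    (occ : ι → Bool → Fin 2 → Fin m)
    (E : Fin m → List (ι × Bool))
    (hocc : ∀ (v : ι) (pol : Bool) (i : Fin 2), (v, pol) ∈ E (occ v pol i))
    (P : Finset (List (KVert ι m)))
    (hP : IsCyclePackingOn (kepArc occ) 3 Set.univ P)
    (A : ι → Bool)
    (hcons : ∀ (v : ι) (i : Fin 2), ∃ c ∈ P,
      cycVerts c = {Sum.inl (v, GNode.alpha i), Sum.inl (v, GNode.beta (!(A v)) i),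
        Sum.inl (v, GNode.leaf (!(A v)) i)})
    (hclause : ∀ cl : Fin m, ∃ c ∈ P, ∃ (v : ι) (pol : Bool) (i : Fin 2),
      cycVerts c = {Sum.inr (Sum.inl cl), Sum.inl (v, GNode.beta pol i)}) :
    ∀ cl : Fin m, ∃ l ∈ E cl, A l.1 = l.2 := by
  intro cl
  obtain ⟨c, hcP, v, pol, i, hc⟩ := hclause cl
  have hcl : occ v pol i = cl := (hP.1 c hcP).1.rel_of_cycVerts_eq_pair hc
  have hpol : pol = A v := by
    by_contra hne
    obtain ⟨g, hgP, hg⟩ := hcons v i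
    have hβc : Sum.inl (v, GNode.beta pol i) ∈ c := show _ ∈ cycVerts c by simp [hc]
    have hβg : Sum.inl (v, GNode.beta pol i) ∈ g := show _ ∈ cycVerts g by
      simp [hg, Bool.eq_not.mpr hne]
    have hδc : Sum.inr (Sum.inl cl) ∈ c := show _ ∈ cycVerts c by simp [hc]
    have hδg : Sum.inr (Sum.inl cl) ∈ cycVerts g := hP.eq_of_mem_of_mem hcP hgP hβc hβg ▸ hδc
    simp [hg] at hδg
  exact ⟨(v, pol), hcl ▸ hocc v pol i, hpol.symm⟩

/-- if in a (maximum) 3-cycle packing of the follower's graph every variable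
gadget is consistent with the truth value `A v` (its internal triangles use the
`β`-nodes of polarity `¬ A v`) and every clause node is covered by a 2-cycle with some
`β`-node, then the truth assignment `A` satisfies every clause of `E`. -/
theorem stmt15 {ι : Type*} [DecidableEq ι] {m : ℕ}
    (occ : ι → Bool → Fin 2 → Fin m)
    (E : Fin m → List (ι × Bool))
    (hocc : ∀ (v : ι) (pol : Bool) (i : Fin 2), (v, pol) ∈ E (occ v pol i))
    (P : Finset (List (KVert ι m)))
    (hP : IsCyclePackingOn (kepArc occ) 3 Set.univ P)
    (hPmax : packSize P = wDir (kepArc occ) 3 Set.univ)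
    (A : ι → Bool)
    (hcons : ∀ (v : ι) (i : Fin 2), ∃ c ∈ P,
      cycVerts c = {Sum.inl (v, GNode.alpha i), Sum.inl (v, GNode.beta (!(A v)) i),
        Sum.inl (v, GNode.leaf (!(A v)) i)})
    (hclause : ∀ cl : Fin m, ∃ c ∈ P, ∃ (v : ι) (pol : Bool) (i : Fin 2),
      cycVerts c = {Sum.inr (Sum.inl cl), Sum.inl (v, GNode.beta pol i)}) :
    ∀ cl : Fin m, ∃ l ∈ E cl, A l.1 = l.2 :=
  stmt15_general occ E hocc P hP A hcons hclause
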